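/- Let τ > 0, N ∈ ℕ, and λ ∈ ℂ with Re λ < 0. Then ζ(N,τ,0,λ) = (4τ / (|2λ−τ|² − |2λ+τ|²)) · |(2λ+τ)/(2λ−τ)|^{2N+2}. (Note that |2λ−τ|² − |2λ+τ|² = −8τ·Re λ > 0.) -/

import Mathlib

/-!
The Laguerre functions `l_{n,τ}` are orthonormal in `L²(0, ∞)`: the substitution `u = τ t`
reduces this to the orthonormality of the `L_n` for the weight `e^{-u}`, and the moments
`∫ u^k e^{-u} du = k!` turn that into two alternating binomial sums, which are forward
differences of binomial coefficients. Hence the truncation error is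
`‖e^{λt}‖² - ∑_{n ≤ N} |s_n|²` (Bessel). The same substitution makes `s_n` a value of the
Laplace transform `∫ e^{-su} L_n(u) du = (s - 1)^n / s^{n+1}`, so `|s_n|²` is geometric with
ratio `q = |(2λ + τ)/(2λ - τ)|²`, and `‖e^{λt}‖² = -1/(2 Re λ)` is the sum of the whole
geometric series; the error is its tail, `-q^{N+1}/(2 Re λ)`.
-/

open MeasureTheory

/-- The (ordinary) Laguerre polynomial `L_n(t) = ∑_{k=0}^n (-1)^k (n!/((k!)²(n-k)!)) t^k`. -/
noncomputable def ordLagPoly (n : ℕ) (t : ℝ) : ℝ :=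
  ∑ k ∈ Finset.range (n + 1),
    (-1 : ℝ) ^ k * ((n.factorial : ℝ) / ((k.factorial : ℝ) ^ 2 * (n - k).factorial)) * t ^ k

/-- The Laguerre function `l_{n,τ}(t) = √τ e^{-τt/2} L_n(τt)`. -/
noncomputable def ordLagFun (τ : ℝ) (n : ℕ) (t : ℝ) : ℝ :=
  Real.sqrt τ * Real.exp (-τ * t / 2) * ordLagPoly n (τ * t)

/-- The Laguerre coefficient `s_{n,τ,0,λ} = ∫₀^∞ e^{λ t} l_{n,τ}(t) dt`. -/
noncomputable def ordLagCoef (τ : ℝ) (n : ℕ) (z : ℂ) : ℂ :=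
  ∫ t in Set.Ioi (0 : ℝ), Complex.exp (z * t) * (ordLagFun τ n t : ℂ)

/-- `ζ(N,τ,0,λ)`: the squared `L²[0,∞)` error of the `N`-truncated Laguerre expansion
of `t ↦ e^{λt}` for order of generalization `α = 0`. -/
noncomputable def ordLagZeta (N : ℕ) (τ : ℝ) (z : ℂ) : ℝ :=
  ∫ t in Set.Ioi (0 : ℝ),
    ‖Complex.exp (z * t) -
        ∑ n ∈ Finset.range (N + 1), ordLagCoef τ n z * (ordLagFun τ n t : ℂ)‖ ^ 2

open Set Filter Finset Topology ComplexConjugate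
open scoped Nat

theorem norm_sub_sum_mul_ofReal_sq {ι : Type*} (s : Finset ι) (w : ℂ) (c : ι → ℂ) (r : ι → ℝ) :
    ‖w - ∑ i ∈ s, c i * r i‖ ^ 2 = ‖w‖ ^ 2 - 2 * ∑ i ∈ s, (conj (c i) * (w * r i)).re
      + ∑ i ∈ s, ∑ j ∈ s, (c i * conj (c j)).re * (r i * r j) := by
  have hnorm (u : ℂ) : ‖u‖ ^ 2 = (u * conj u).re := by
    rw [Complex.mul_conj, Complex.normSq_eq_norm_sq, Complex.ofReal_re]
  have hcross : w * ∑ i ∈ s, conj (c i) * r i = ∑ i ∈ s, conj (c i) * (w * r i) := by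
    rw [mul_sum]
    exact sum_congr rfl fun i _ ↦ by ring
  have hcross' : (∑ i ∈ s, c i * r i) * conj w = conj (∑ i ∈ s, conj (c i) * (w * r i)) := by
    simp only [map_sum, map_mul, Complex.conj_conj, Complex.conj_ofReal, sum_mul]
    exact sum_congr rfl fun i _ ↦ by ring
  have hdiag : (∑ i ∈ s, c i * r i) * ∑ j ∈ s, conj (c j) * r j
      = ∑ i ∈ s, ∑ j ∈ s, c i * conj (c j) * ((r i * r j : ℝ) : ℂ) := by
    rw [sum_mul_sum]
    exact sum_congr rfl fun i _ ↦ sum_congr rfl fun j _ ↦ by push_cast; ring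
  rw [hnorm, hnorm, map_sub, map_sum]
  simp only [map_mul, Complex.conj_ofReal]
  rw [show ∀ a b u v : ℂ, (a - b) * (u - v) = a * u - a * v - b * u + b * v from
    fun _ _ _ _ ↦ by ring, hcross, hcross', hdiag]
  simp only [Complex.add_re, Complex.sub_re, Complex.conj_re, Complex.re_sum,
    Complex.re_mul_ofReal]
  ring

theorem integral_norm_sub_sum_mul_sq_of_orthonormal {α ι : Type*} [MeasurableSpace α]
    {μ : Measure α} [DecidableEq ι] {v : ι → α → ℝ} (hv : ∀ i, MemLp (v i) 2 μ)
    (horth : ∀ i j, ∫ x, v i x * v j x ∂μ = if i = j then 1 else 0)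
    {f : α → ℂ} (hf : MemLp f 2 μ) (s : Finset ι) :
    ∫ x, ‖f x - ∑ i ∈ s, (∫ y, f y * v i y ∂μ) * v i x‖ ^ 2 ∂μ
      = ∫ x, ‖f x‖ ^ 2 ∂μ - ∑ i ∈ s, ‖∫ x, f x * v i x ∂μ‖ ^ 2 := by
  set c : ι → ℂ := fun i ↦ ∫ x, f x * v i x ∂μ
  have hf2 : Integrable (fun x ↦ ‖f x‖ ^ 2) μ := hf.integrable_norm_pow two_ne_zero
  have hfv (i : ι) : Integrable (fun x ↦ conj (c i) * (f x * v i x)) μ :=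
    (hf.integrable_mul (hv i).ofReal).const_mul _
  have hfv_re (i : ι) : Integrable (fun x ↦ (conj (c i) * (f x * v i x)).re) μ := (hfv i).re
  have hvv (i j : ι) : Integrable (fun x ↦ (c i * conj (c j)).re * (v i x * v j x)) μ :=
    ((hv i).integrable_mul (hv j)).const_mul _
  have hcross : ∫ x, ∑ i ∈ s, (conj (c i) * (f x * v i x)).re ∂μ = ∑ i ∈ s, ‖c i‖ ^ 2 := by
    rw [integral_finsetSum _ fun i _ ↦ hfv_re i]
    refine sum_congr rfl fun i _ ↦ (integral_re (hfv i)).trans ?_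
    rw [RCLike.re_to_complex, integral_const_mul, mul_comm, Complex.mul_conj,
      Complex.normSq_eq_norm_sq, Complex.ofReal_re]
  have hdiag : ∫ x, ∑ i ∈ s, ∑ j ∈ s, (c i * conj (c j)).re * (v i x * v j x) ∂μ
      = ∑ i ∈ s, ‖c i‖ ^ 2 := by
    rw [integral_finsetSum _ fun i _ ↦ integrable_finsetSum _ fun j _ ↦ hvv i j]
    refine sum_congr rfl fun i hi ↦ ?_
    simp_rw [integral_finsetSum _ fun j _ ↦ hvv i j, integral_const_mul, horth, mul_ite,
      mul_one, mul_zero, sum_ite_eq, if_pos hi, Complex.mul_conj, Complex.normSq_eq_norm_sq,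
      Complex.ofReal_re]
  have hcross_int : Integrable (fun x ↦ 2 * ∑ i ∈ s, (conj (c i) * (f x * v i x)).re) μ :=
    (integrable_finsetSum _ fun i _ ↦ hfv_re i).const_mul 2
  simp_rw [norm_sub_sum_mul_ofReal_sq]
  rw [integral_add, integral_sub hf2 hcross_int, integral_const_mul, hcross, hdiag]
  · ring
  · exact hf2.sub hcross_int
  · exact integrable_finsetSum _ fun i _ ↦ integrable_finsetSum _ fun j _ ↦ hvv i j

theorem sum_range_neg_one_pow_mul_choose_mul_eq_fwdDiff_iter (f : ℕ → ℤ) (n : ℕ) :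
    ∑ k ∈ range (n + 1), (-1) ^ k * n.choose k * f k = (-1) ^ n * (fwdDiff 1)^[n] f 0 := by
  rw [fwdDiff_iter_eq_sum_shift, mul_sum]
  refine sum_congr rfl fun k hk ↦ ?_
  have hsplit : (-1 : ℤ) ^ n = (-1) ^ (n - k) * (-1) ^ k := by
    rw [← pow_add, Nat.sub_add_cancel (Nat.lt_succ_iff.mp (mem_range.mp hk))]
  rw [hsplit, smul_eq_mul, zero_add, smul_eq_mul, mul_one]
  have hsq : ((-1 : ℤ) ^ (n - k)) ^ 2 = 1 := by rw [← pow_mul, pow_mul', neg_one_sq, one_pow]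
  linear_combination (-(-1) ^ k * n.choose k * f k) * hsq

theorem fwdDiff_iter_choose_apply_self (n j : ℕ) :
    (fwdDiff 1)^[n] (fun x ↦ x.choose j : ℕ → ℤ) j = j.choose n := by
  rcases le_or_gt n j with hnj | hjn
  · obtain ⟨d, rfl⟩ := Nat.exists_eq_add_of_le hnj
    rw [fwdDiff_iter_choose, Nat.choose_symm_add]
  · obtain ⟨d, rfl⟩ := Nat.exists_eq_add_of_lt hjn
    have hconst := fwdDiff_iter_choose 0 j
    rw [add_zero] at hconst
    rw [Nat.choose_eq_zero_of_lt (by omega), Nat.cast_zero, add_assoc, add_comm,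
      Function.iterate_add_apply, hconst]
    simp only [Nat.choose_zero_right, Nat.cast_one]
    rw [Function.iterate_succ_apply, fwdDiff_const]
    simp [fwdDiff_iter_eq_sum_shift]

theorem sum_range_neg_one_pow_mul_choose_mul_add_choose (n j : ℕ) :
    ∑ k ∈ range (n + 1), (-1) ^ k * n.choose k * ((k + j).choose j : ℤ)
      = (-1) ^ n * j.choose n := by
  rw [sum_range_neg_one_pow_mul_choose_mul_eq_fwdDiff_iter (fun k ↦ ((k + j).choose j : ℤ)),
    fwdDiff_iter_comp_add 1 (fun x ↦ (x.choose j : ℤ)) j n 0, zero_add,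
    fwdDiff_iter_choose_apply_self]

theorem sum_range_neg_one_pow_mul_choose_mul_choose (m n : ℕ) :
    ∑ j ∈ range (m + 1), (-1) ^ j * m.choose j * (j.choose n : ℤ)
      = if n = m then (-1) ^ n else 0 := by
  rw [sum_range_neg_one_pow_mul_choose_mul_eq_fwdDiff_iter (fun j ↦ (j.choose n : ℤ)),
    fwdDiff_iter_choose_zero]
  split_ifs <;> simp_all

theorem sum_sum_neg_one_pow_mul_choose_mul_add_choose (n m : ℕ) :
    ∑ k ∈ range (n + 1), ∑ j ∈ range (m + 1),
      (-1) ^ k * n.choose k * ((-1) ^ j * m.choose j) * ((k + j).choose j : ℤ)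
      = if n = m then 1 else 0 := by
  have hinner (j : ℕ) : ∑ k ∈ range (n + 1),
      (-1) ^ k * n.choose k * ((-1) ^ j * m.choose j) * ((k + j).choose j : ℤ)
      = (-1) ^ n * ((-1) ^ j * m.choose j * j.choose n) := by
    rw [← mul_assoc, mul_comm _ ((-1) ^ j * _), mul_assoc,
      ← sum_range_neg_one_pow_mul_choose_mul_add_choose n j, mul_sum]
    exact sum_congr rfl fun k _ ↦ by ring
  rw [sum_comm, sum_congr rfl fun j _ ↦ hinner j, ← mul_sum,
    sum_range_neg_one_pow_mul_choose_mul_choose]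
  split_ifs <;> simp [← pow_add, ← two_mul, pow_mul]

theorem integrableOn_pow_mul_exp_neg_mul {b : ℝ} (hb : 0 < b) (k : ℕ) :
    IntegrableOn (fun t : ℝ ↦ t ^ k * Real.exp (-b * t)) (Ioi 0) := by
  refine (integrableOn_rpow_mul_exp_neg_mul_rpow (s := k) (p := 1)
    (by linarith [k.cast_nonneg (α := ℝ)]) one_pos hb).congr_fun (fun t _ ↦ ?_) measurableSet_Ioi
  simp [Real.rpow_natCast]

theorem integrableOn_pow_mul_exp_neg (k : ℕ) :
    IntegrableOn (fun t : ℝ ↦ t ^ k * Real.exp (-t)) (Ioi 0) := by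
  simpa using integrableOn_pow_mul_exp_neg_mul one_pos k

theorem integral_pow_mul_exp_neg (k : ℕ) :
    ∫ t in Ioi (0 : ℝ), t ^ k * Real.exp (-t) = k ! := by
  rw [← Real.Gamma_nat_eq_factorial, Real.Gamma_eq_integral (by positivity)]
  refine setIntegral_congr_fun measurableSet_Ioi fun t _ ↦ ?_
  simp [Real.rpow_natCast, mul_comm]

theorem norm_ofReal_pow_mul_cexp_neg_mul {t : ℝ} (ht : 0 ≤ t) (k : ℕ) (s : ℂ) :
    ‖(t : ℂ) ^ k * Complex.exp (-(s * t))‖ = t ^ k * Real.exp (-s.re * t) := by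
  simp [Complex.norm_exp, Complex.norm_real, abs_of_nonneg ht]

theorem integrableOn_ofReal_pow_mul_cexp_neg_mul {s : ℂ} (hs : 0 < s.re) (k : ℕ) :
    IntegrableOn (fun t : ℝ ↦ (t : ℂ) ^ k * Complex.exp (-(s * t))) (Ioi 0) := by
  refine (integrableOn_pow_mul_exp_neg_mul hs k).mono' (by fun_prop) ?_
  filter_upwards [ae_restrict_mem measurableSet_Ioi] with t ht
  exact (norm_ofReal_pow_mul_cexp_neg_mul ht.le k s).le

theorem tendsto_ofReal_pow_mul_cexp_neg_mul_atTop {s : ℂ} (hs : 0 < s.re) (k : ℕ) :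
    Tendsto (fun t : ℝ ↦ (t : ℂ) ^ k * Complex.exp (-(s * t))) atTop (𝓝 0) := by
  rw [tendsto_zero_iff_norm_tendsto_zero]
  refine (tendsto_rpow_mul_exp_neg_mul_atTop_nhds_zero k s.re hs).congr' ?_
  filter_upwards [eventually_ge_atTop 0] with t ht
  rw [norm_ofReal_pow_mul_cexp_neg_mul ht, Real.rpow_natCast, neg_mul]

theorem hasDerivAt_ofReal_pow_succ_mul_cexp_neg_mul (s : ℂ) (k : ℕ) (t : ℝ) :
    HasDerivAt (fun t : ℝ ↦ (t : ℂ) ^ (k + 1) * Complex.exp (-(s * t)))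
      ((k + 1) * ((t : ℂ) ^ k * Complex.exp (-(s * t)))
        - s * ((t : ℂ) ^ (k + 1) * Complex.exp (-(s * t)))) t := by
  have hpow : HasDerivAt (fun y : ℝ ↦ (y : ℂ) ^ (k + 1)) ((k + 1) * (t : ℂ) ^ k) t := by
    simpa using (hasDerivAt_pow (k + 1) (t : ℂ)).comp_ofReal
  have hexp : HasDerivAt (fun y : ℝ ↦ Complex.exp (-(s * y))) (-s * Complex.exp (-(s * t))) t := by
    simpa [mul_comm] using ((hasDerivAt_id (t : ℂ)).const_mul s).neg.cexp.comp_ofReal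
  exact (hpow.mul hexp).congr_deriv (by ring)

theorem integral_ofReal_pow_mul_cexp_neg_mul {s : ℂ} (hs : 0 < s.re) (k : ℕ) :
    ∫ t in Ioi (0 : ℝ), (t : ℂ) ^ k * Complex.exp (-(s * t)) = k ! / s ^ (k + 1) := by
  have hs0 : s ≠ 0 := fun h ↦ by simp [h] at hs
  induction k with
  | zero => simpa [neg_div] using integral_exp_mul_complex_Ioi (a := -s) (by simpa) 0
  | succ k ih =>
    have hint := integrableOn_ofReal_pow_mul_cexp_neg_mul hs
    have hparts := integral_Ioi_of_hasDerivAt_of_tendsto'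
      (fun t _ ↦ hasDerivAt_ofReal_pow_succ_mul_cexp_neg_mul s k t)
      (((hint k).const_mul _).sub ((hint (k + 1)).const_mul _))
      (tendsto_ofReal_pow_mul_cexp_neg_mul_atTop hs (k + 1))
    rw [integral_sub ((hint k).const_mul _) ((hint (k + 1)).const_mul _), integral_const_mul,
      integral_const_mul, ih] at hparts
    simp only [Complex.ofReal_zero, ne_eq, add_eq_zero, one_ne_zero, and_false,
      not_false_eq_true, zero_pow, zero_mul, sub_zero] at hparts
    field_simp at hparts ⊢
    push_cast [Nat.factorial_succ]
    linear_combination -hparts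

theorem ordLagPoly_eq_sum (n : ℕ) (t : ℝ) :
    ordLagPoly n t = ∑ k ∈ range (n + 1), (-1) ^ k * n.choose k / k ! * t ^ k := by
  refine sum_congr rfl fun k hk ↦ ?_
  have hchoose := Nat.choose_mul_factorial_mul_factorial (Nat.lt_succ_iff.mp (mem_range.mp hk))
  rw [← hchoose]
  push_cast
  field_simp

theorem ordLagPoly_mul_ordLagPoly_mul_exp_neg (n m : ℕ) (u : ℝ) :
    ordLagPoly n u * ordLagPoly m u * Real.exp (-u)
      = ∑ k ∈ range (n + 1), ∑ j ∈ range (m + 1),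
          (-1) ^ k * n.choose k / k ! * ((-1) ^ j * m.choose j / j !)
            * (u ^ (k + j) * Real.exp (-u)) := by
  rw [ordLagPoly_eq_sum, ordLagPoly_eq_sum, sum_mul_sum, sum_mul]
  exact sum_congr rfl fun k _ ↦ by rw [sum_mul]; exact sum_congr rfl fun j _ ↦ by ring

theorem integrableOn_ordLagPoly_mul_ordLagPoly_mul_exp_neg (n m : ℕ) :
    IntegrableOn (fun u ↦ ordLagPoly n u * ordLagPoly m u * Real.exp (-u)) (Ioi 0) := by
  simp_rw [ordLagPoly_mul_ordLagPoly_mul_exp_neg]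
  refine integrable_finsetSum _ fun k _ ↦ integrable_finsetSum _ fun j _ ↦ ?_
  exact (integrableOn_pow_mul_exp_neg (k + j)).const_mul _

theorem integral_ordLagPoly_mul_ordLagPoly_mul_exp_neg (n m : ℕ) :
    ∫ u in Ioi 0, ordLagPoly n u * ordLagPoly m u * Real.exp (-u) = if n = m then 1 else 0 := by
  simp_rw [ordLagPoly_mul_ordLagPoly_mul_exp_neg]
  rw [integral_finsetSum _ fun k _ ↦ integrable_finsetSum _ fun j _ ↦
    (integrableOn_pow_mul_exp_neg (k + j)).const_mul _]
  have hterm (k j : ℕ) : ∫ u in Ioi 0, (-1) ^ k * n.choose k / k ! * ((-1) ^ j * m.choose j / j !)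
      * (u ^ (k + j) * Real.exp (-u))
      = (((-1) ^ k * n.choose k * ((-1) ^ j * m.choose j) * ((k + j).choose j : ℤ) : ℤ) : ℝ) := by
    rw [integral_const_mul, integral_pow_mul_exp_neg, ← Nat.add_choose_mul_factorial_mul_factorial]
    push_cast
    field_simp
  simp_rw [integral_finsetSum _ fun j _ ↦ (integrableOn_pow_mul_exp_neg (_ + j)).const_mul _, hterm]
  exact_mod_cast sum_sum_neg_one_pow_mul_choose_mul_add_choose n m

theorem integral_ordLagPoly_mul_cexp_neg_mul {s : ℂ} (hs : 0 < s.re) (n : ℕ) :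
    ∫ u in Ioi 0, (ordLagPoly n u : ℂ) * Complex.exp (-(s * u)) = (s - 1) ^ n / s ^ (n + 1) := by
  have hs0 : s ≠ 0 := fun h ↦ by simp [h] at hs
  simp_rw [ordLagPoly_eq_sum]
  push_cast
  simp_rw [sum_mul, mul_assoc]
  rw [integral_finsetSum _ fun k _ ↦ (integrableOn_ofReal_pow_mul_cexp_neg_mul hs k).const_mul _,
    sub_eq_neg_add, add_pow, sum_div]
  refine sum_congr rfl fun k hk ↦ ?_
  obtain ⟨d, rfl⟩ := Nat.exists_eq_add_of_le (Nat.lt_succ_iff.mp (mem_range.mp hk))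
  rw [integral_const_mul, integral_ofReal_pow_mul_cexp_neg_mul hs, Nat.add_sub_cancel_left]
  have hk : (k ! : ℂ) ≠ 0 := Nat.cast_ne_zero.mpr k.factorial_ne_zero
  field_simp
  ring

theorem ordLagFun_mul_ordLagFun {τ : ℝ} (hτ : 0 ≤ τ) (n m : ℕ) (t : ℝ) :
    ordLagFun τ n t * ordLagFun τ m t
      = τ * (ordLagPoly n (τ * t) * ordLagPoly m (τ * t) * Real.exp (-(τ * t))) := by
  have hexp : Real.exp (-τ * t / 2) * Real.exp (-τ * t / 2) = Real.exp (-(τ * t)) := by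
    rw [← Real.exp_add]; ring_nf
  rw [ordLagFun, ordLagFun]
  linear_combination (Real.exp (-τ * t / 2) * Real.exp (-τ * t / 2) * ordLagPoly n (τ * t)
    * ordLagPoly m (τ * t)) * Real.mul_self_sqrt hτ + (τ * ordLagPoly n (τ * t)
    * ordLagPoly m (τ * t)) * hexp

theorem integral_ordLagFun_mul_ordLagFun {τ : ℝ} (hτ : 0 < τ) (n m : ℕ) :
    ∫ t in Ioi 0, ordLagFun τ n t * ordLagFun τ m t = if n = m then 1 else 0 := by
  simp_rw [ordLagFun_mul_ordLagFun hτ.le]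
  rw [integral_const_mul,
    integral_comp_mul_left_Ioi (fun u ↦ ordLagPoly n u * ordLagPoly m u * Real.exp (-u)) 0 hτ,
    mul_zero, smul_eq_mul, mul_inv_cancel_left₀ hτ.ne',
    integral_ordLagPoly_mul_ordLagPoly_mul_exp_neg]

theorem memLp_ordLagFun {τ : ℝ} (hτ : 0 < τ) (n : ℕ) :
    MemLp (ordLagFun τ n) 2 (volume.restrict (Ioi 0)) := by
  rw [memLp_two_iff_integrable_sq (by unfold ordLagFun ordLagPoly; fun_prop)]
  simp_rw [sq, ordLagFun_mul_ordLagFun hτ.le]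
  have hscaled : IntegrableOn
      (fun t ↦ ordLagPoly n (τ * t) * ordLagPoly n (τ * t) * Real.exp (-(τ * t))) (Ioi 0) :=
    (integrableOn_Ioi_comp_mul_left_iff (fun u ↦ ordLagPoly n u * ordLagPoly n u * Real.exp (-u))
      0 hτ).mpr (by simpa using integrableOn_ordLagPoly_mul_ordLagPoly_mul_exp_neg n n)
  exact hscaled.const_mul τ

theorem ordLagCoef_eq {τ : ℝ} (hτ : 0 < τ) {z : ℂ} (hz : z.re < 0) (n : ℕ) :
    ordLagCoef τ n z = Real.sqrt τ * (τ / 2 - z - τ) ^ n / (τ / 2 - z) ^ (n + 1) := by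
  set s : ℂ := (τ / 2 - z) / τ with hs_def
  have hτ0 : (τ : ℂ) ≠ 0 := by exact_mod_cast hτ.ne'
  have hs : 0 < s.re := by
    rw [hs_def, Complex.div_ofReal_re]
    simp only [Complex.sub_re, Complex.div_ofNat_re, Complex.ofReal_re]
    exact div_pos (by linarith) hτ
  have hpoint (t : ℝ) : Complex.exp (z * t) * (ordLagFun τ n t : ℂ)
      = Real.sqrt τ * ((ordLagPoly n (τ * t) : ℂ) * Complex.exp (-(s * ((τ * t : ℝ) : ℂ)))) := by
    have hexp : -(s * ((τ * t : ℝ) : ℂ)) = z * t + -τ * t / 2 := by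
      rw [hs_def]; push_cast; field_simp; ring
    rw [ordLagFun, hexp, Complex.exp_add]
    push_cast
    ring
  rw [ordLagCoef]
  simp_rw [hpoint]
  rw [integral_const_mul,
    integral_comp_mul_left_Ioi (fun u ↦ (ordLagPoly n u : ℂ) * Complex.exp (-(s * u))) 0 hτ,
    mul_zero, integral_ordLagPoly_mul_cexp_neg_mul hs, hs_def, Complex.real_smul,
    div_sub_one hτ0, div_pow, div_pow, Complex.ofReal_inv]
  have hp : (τ / 2 - z : ℂ) ≠ 0 := fun h ↦ by simp [hs_def, h] at hs
  field_simp
  ring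

theorem norm_ordLagCoef_sq {τ : ℝ} (hτ : 0 < τ) {z : ℂ} (hz : z.re < 0) (n : ℕ) :
    ‖ordLagCoef τ n z‖ ^ 2
      = 4 * τ / ‖2 * z - τ‖ ^ 2 * (‖2 * z + τ‖ ^ 2 / ‖2 * z - τ‖ ^ 2) ^ n := by
  have hsub : ‖2 * z - τ‖ ≠ 0 := fun h ↦ by
    have := congrArg Complex.re (norm_eq_zero.mp h)
    simp at this
    linarith
  rw [ordLagCoef_eq hτ hz, show (τ / 2 - z - τ : ℂ) = -(2 * z + τ) / 2 by ring,
    show (τ / 2 - z : ℂ) = -(2 * z - τ) / 2 by ring]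
  simp only [norm_div, norm_mul, norm_pow, norm_neg, Complex.norm_real, Complex.norm_two,
    Real.norm_of_nonneg (Real.sqrt_nonneg τ)]
  generalize ‖2 * z + τ‖ = a at *
  generalize ‖2 * z - τ‖ = b at *
  simp only [div_pow, mul_pow, Real.sq_sqrt hτ.le, ← pow_mul]
  field_simp
  ring

theorem norm_cexp_ofReal_mul_sq (z : ℂ) (t : ℝ) :
    ‖Complex.exp (z * t)‖ ^ 2 = Real.exp (2 * z.re * t) := by
  rw [Complex.norm_exp, ← Real.exp_nat_mul]
  simp only [Complex.mul_re, Complex.ofReal_re, Complex.ofReal_im, mul_zero, sub_zero]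
  push_cast
  ring_nf

theorem memLp_cexp_ofReal_mul {z : ℂ} (hz : z.re < 0) :
    MemLp (fun t : ℝ ↦ Complex.exp (z * t)) 2 (volume.restrict (Ioi 0)) := by
  rw [memLp_two_iff_integrable_sq_norm (by fun_prop)]
  simp_rw [norm_cexp_ofReal_mul_sq]
  exact integrableOn_exp_mul_Ioi (by linarith) 0

theorem integral_norm_cexp_ofReal_mul_sq {z : ℂ} (hz : z.re < 0) :
    ∫ t in Ioi (0 : ℝ), ‖Complex.exp (z * t)‖ ^ 2 = -1 / (2 * z.re) := by
  simp_rw [norm_cexp_ofReal_mul_sq]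
  rw [integral_exp_mul_Ioi (by linarith) 0]
  simp

theorem norm_two_mul_sub_sq_sub_norm_two_mul_add_sq (z : ℂ) (τ : ℝ) :
    ‖2 * z - τ‖ ^ 2 - ‖2 * z + τ‖ ^ 2 = -(8 * τ * z.re) := by
  simp only [Complex.sq_norm, Complex.normSq_apply, Complex.sub_re, Complex.add_re,
    Complex.sub_im, Complex.add_im, Complex.mul_re, Complex.mul_im, Complex.ofReal_re,
    Complex.ofReal_im, Complex.re_ofNat, Complex.im_ofNat]
  ring

theorem div_one_sub_sub_sum_range_mul_pow {K : Type*} [Field K] {q : K} (hq : q ≠ 1)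
    (a : K) (M : ℕ) :
    a / (1 - q) - ∑ n ∈ range M, a * q ^ n = a / (1 - q) * q ^ M := by
  have hq' : 1 - q ≠ 0 := sub_ne_zero.mpr hq.symm
  rw [← mul_sum, geom_sum_eq hq]
  field_simp
  ring

theorem ordLagZeta_eq (τ : ℝ) (hτ : 0 < τ) (N : ℕ) (z : ℂ) (hz : z.re < 0) :
    ordLagZeta N τ z =
      4 * τ / (‖2 * z - τ‖ ^ 2 - ‖2 * z + τ‖ ^ 2) *
        ‖(2 * z + τ) / (2 * z - τ)‖ ^ (2 * N + 2) := by
  set A := ‖2 * z - τ‖ ^ 2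
  set B := ‖2 * z + τ‖ ^ 2
  have hAB : A - B = -(8 * τ * z.re) := norm_two_mul_sub_sq_sub_norm_two_mul_add_sq z τ
  have hAB_pos : 0 < A - B := by rw [hAB]; nlinarith
  have hA : 0 < A := by have hB : 0 ≤ B := sq_nonneg _; linarith
  have hq : B / A ≠ 1 := fun h ↦ by rw [div_eq_one_iff_eq hA.ne'] at h; linarith
  have hscale : 4 * τ / A / (1 - B / A) = 4 * τ / (A - B) := by
    rw [one_sub_div hA.ne', div_div_div_cancel_right₀ hA.ne']
  have hratio : ‖(2 * z + τ) / (2 * z - τ)‖ ^ (2 * N + 2) = (B / A) ^ (N + 1) := by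
    rw [show 2 * N + 2 = 2 * (N + 1) by ring, pow_mul, norm_div, div_pow]
  have hbessel : ordLagZeta N τ z = (∫ t in Ioi (0 : ℝ), ‖Complex.exp (z * t)‖ ^ 2)
      - ∑ n ∈ range (N + 1), ‖ordLagCoef τ n z‖ ^ 2 :=
    integral_norm_sub_sum_mul_sq_of_orthonormal (memLp_ordLagFun hτ)
      (integral_ordLagFun_mul_ordLagFun hτ) (memLp_cexp_ofReal_mul hz) _
  have hfirst : -1 / (2 * z.re) = 4 * τ / A / (1 - B / A) := by
    rw [hscale, hAB]
    field_simp
    ring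
  rw [hbessel, integral_norm_cexp_ofReal_mul_sq hz,
    sum_congr rfl fun n _ ↦ norm_ordLagCoef_sq hτ hz n, hfirst,
    div_one_sub_sub_sum_range_mul_pow hq, hscale, hratio]
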